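/- Let n_x, n_y be coprime positive integers and φ_x, φ_y real numbers such that n_y·φ_x − n_x·φ_y is not an integer multiple of π. Then the set of pairs (t₁, t₂) with 0 ≤ t₁ < t₂ < 2π, cos(n_x t₁ + φ_x) = cos(n_x t₂ + φ_x), and cos(n_y t₁ + φ_y) = cos(n_y t₂ + φ_y) is finite and has exactly 2·n_x·n_y − n_x − n_y elements. -/

import Mathlib

/-!
Since `cos a = cos b` iff `b ≡ ±a (mod 2π)`, the `x`-coordinates at `t₁ < t₂` agree iff
`nx (t₂ - t₁) ∈ 2πℤ` or `nx (t₁ + t₂) + 2φx ∈ 2πℤ`, and likewise for `y`. The two difference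
conditions together would give `t₂ - t₁ ∈ 2πℤ` by Bézout, and the two sum conditions together
contradict the phase condition, so the double points split into two disjoint families.
The family with a difference condition for `n₁` and a sum condition for `n₂` is parametrized by
`t₂ - t₁ = 2πk/n₁` with `0 < k < n₁` and `t₁ + t₂ = 2(πm - φ)/n₂`, where `m` runs through an
integer interval; the lengths of these intervals for `k` and `n₁ - k` add up to `2 n₂`, so the
family has `n₂ (n₁ - 1)` members.
-/

open Real

namespace Lissajous

lemma cos_mul_add_eq_cos_mul_add_iff (a φ t₁ t₂ : ℝ) :
    cos (a * t₁ + φ) = cos (a * t₂ + φ) ↔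
      (∃ k : ℤ, a * (t₂ - t₁) = 2 * π * k) ∨ ∃ m : ℤ, a * (t₁ + t₂) + 2 * φ = 2 * π * m := by
  rw [Real.cos_eq_cos_iff, ← exists_or]
  refine exists_congr fun k => or_congr ?_ ?_ <;> constructor <;> intro h <;> linear_combination h

lemma not_both_mul_eq_two_pi_mul_int_of_coprime {a b : ℕ} (hab : Nat.Coprime a b) {t : ℝ}
    (ht₀ : 0 < t) (ht : t < 2 * π) :
    ¬ ((∃ j : ℤ, a * t = 2 * π * j) ∧ ∃ l : ℤ, b * t = 2 * π * l) := by
  rintro ⟨⟨j, hj⟩, ⟨l, hl⟩⟩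
  obtain ⟨u, v, huv⟩ := Nat.isCoprime_iff_coprime.mpr hab
  have huv' : (u : ℝ) * a + v * b = 1 := by exact_mod_cast huv
  have ht_eq : t = 2 * π * (u * j + v * l : ℤ) := by
    push_cast
    linear_combination u * hj + v * hl - t * huv'
  have h₀ : (0 : ℝ) < (u * j + v * l : ℤ) := by nlinarith [pi_pos]
  have h₁ : ((u * j + v * l : ℤ) : ℝ) < 1 := by nlinarith [pi_pos]
  norm_cast at h₀ h₁
  omega

lemma not_both_mul_add_eq_two_pi_mul_int_of_phase {a b : ℕ} {φa φb : ℝ}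
    (hphase : ¬ ∃ l : ℤ, (b : ℝ) * φa - a * φb = l * π) (u : ℝ) :
    ¬ ((∃ j : ℤ, a * u + 2 * φa = 2 * π * j) ∧ ∃ l : ℤ, b * u + 2 * φb = 2 * π * l) := by
  rintro ⟨⟨j, hj⟩, ⟨l, hl⟩⟩
  refine hphase ⟨b * j - a * l, ?_⟩
  push_cast
  linear_combination (b / 2 : ℝ) * hj - (a / 2 : ℝ) * hl

def diffSumPairs (n₁ n₂ : ℕ) (φ : ℝ) : Set (ℝ × ℝ) :=
  {p | 0 ≤ p.1 ∧ p.1 < p.2 ∧ p.2 < 2 * π ∧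
    (∃ k : ℤ, (n₁ : ℝ) * (p.2 - p.1) = 2 * π * k) ∧
    ∃ m : ℤ, (n₂ : ℝ) * (p.1 + p.2) + 2 * φ = 2 * π * m}

lemma disjoint_diffSumPairs {a b : ℕ} (hab : Nat.Coprime a b) (φ ψ : ℝ) :
    Disjoint (diffSumPairs a b φ) (diffSumPairs b a ψ) := by
  rw [Set.disjoint_left]
  rintro p ⟨-, hlt, hp₂, ha, -⟩ ⟨hp₁, -, -, hb, -⟩
  exact not_both_mul_eq_two_pi_mul_int_of_coprime hab (sub_pos.2 hlt) (by linarith) ⟨ha, hb⟩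

lemma doublePoints_eq_union {a b : ℕ} (hab : Nat.Coprime a b) {φa φb : ℝ}
    (hphase : ¬ ∃ l : ℤ, (b : ℝ) * φa - a * φb = l * π) :
    {p : ℝ × ℝ | 0 ≤ p.1 ∧ p.1 < p.2 ∧ p.2 < 2 * π ∧
      cos (a * p.1 + φa) = cos (a * p.2 + φa) ∧ cos (b * p.1 + φb) = cos (b * p.2 + φb)} =
      diffSumPairs a b φb ∪ diffSumPairs b a φa := by
  ext p
  simp only [diffSumPairs, Set.mem_union, Set.mem_ofPred_eq, cos_mul_add_eq_cos_mul_add_iff]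
  constructor
  · rintro ⟨hp₁, hlt, hp₂, ha, hb⟩
    have := not_both_mul_eq_two_pi_mul_int_of_coprime hab (sub_pos.2 hlt) (by linarith)
    have := not_both_mul_add_eq_two_pi_mul_int_of_phase hphase (p.1 + p.2)
    tauto
  · tauto

noncomputable def diffSumPoint (n₁ n₂ : ℕ) (φ : ℝ) (k : ℕ) (m : ℤ) : ℝ × ℝ :=
  ((π * m - φ) / n₂ - π * k / n₁, (π * m - φ) / n₂ + π * k / n₁)

noncomputable def lowerIndex (n₁ n₂ : ℕ) (φ : ℝ) (k : ℕ) : ℤ :=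
  ⌈(n₂ : ℝ) * k / n₁ + φ / π⌉

-- The upper bound encodes `t₂ < 2π`; written this way, the counts telescope under `k ↦ n₁ - k`.
noncomputable def pairIndices (n₁ n₂ : ℕ) (φ : ℝ) : Finset ((_ : ℕ) × ℤ) :=
  (Finset.Ico 1 n₁).sigma fun k =>
    Finset.Ico (lowerIndex n₁ n₂ φ k) (lowerIndex n₁ n₂ φ (n₁ - k) + n₂)

section

variable {n₁ n₂ : ℕ} {φ : ℝ}

lemma diffSumPoint_snd_sub_fst (k : ℕ) (m : ℤ) :
    (diffSumPoint n₁ n₂ φ k m).2 - (diffSumPoint n₁ n₂ φ k m).1 = 2 * π * k / n₁ := by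
  simp only [diffSumPoint]
  ring

lemma diffSumPoint_fst_add_snd (k : ℕ) (m : ℤ) :
    (diffSumPoint n₁ n₂ φ k m).1 + (diffSumPoint n₁ n₂ φ k m).2 = 2 * (π * m - φ) / n₂ := by
  simp only [diffSumPoint]
  ring

lemma diffSumPoint_fst_nonneg_iff (h₂ : 0 < n₂) (k : ℕ) (m : ℤ) :
    0 ≤ (diffSumPoint n₁ n₂ φ k m).1 ↔ lowerIndex n₁ n₂ φ k ≤ m := by
  have hfst : (diffSumPoint n₁ n₂ φ k m).1 = π / n₂ * (m - (n₂ * k / n₁ + φ / π)) := by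
    simp only [diffSumPoint]
    field_simp
    ring
  rw [lowerIndex, Int.ceil_le, hfst, mul_nonneg_iff_of_pos_left (by positivity), sub_nonneg]

lemma diffSumPoint_snd_lt_two_pi_iff (h₁ : 0 < n₁) (h₂ : 0 < n₂) {k : ℕ} (hk : k ≤ n₁) (m : ℤ) :
    (diffSumPoint n₁ n₂ φ k m).2 < 2 * π ↔ m < lowerIndex n₁ n₂ φ (n₁ - k) + n₂ := by
  have hsnd : 2 * π - (diffSumPoint n₁ n₂ φ k m).2 =
      π / n₂ * ((n₂ * (n₁ - k : ℕ) / n₁ + φ / π + n₂) - m) := by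
    simp only [diffSumPoint]
    rw [Nat.cast_sub hk]
    field_simp
    ring
  rw [lowerIndex, ← Int.ceil_add_natCast, Int.lt_ceil, ← sub_pos, hsnd,
    mul_pos_iff_of_pos_left (by positivity), sub_pos]

lemma lowerIndex_le {k : ℕ} (hk : k ≤ n₁) :
    lowerIndex n₁ n₂ φ k ≤ lowerIndex n₁ n₂ φ (n₁ - k) + n₂ := by
  rw [lowerIndex, lowerIndex, ← Int.ceil_add_natCast]
  refine Int.ceil_mono ?_
  have hk' : (n₂ : ℝ) * k / n₁ ≤ n₂ :=
    div_le_of_le_mul₀ (by positivity) (by positivity) (by gcongr)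
  have : (0 : ℝ) ≤ n₂ * (n₁ - k : ℕ) / n₁ := by positivity
  linarith

lemma card_pairIndices (h₁ : 0 < n₁) : (pairIndices n₁ n₂ φ).card = n₂ * (n₁ - 1) := by
  have hreflect : ∑ k ∈ Finset.Ico 1 n₁, lowerIndex n₁ n₂ φ (n₁ - k) =
      ∑ k ∈ Finset.Ico 1 n₁, lowerIndex n₁ n₂ φ k := by
    rw [Finset.sum_Ico_reflect _ _ n₁.le_succ, Nat.add_sub_cancel_left, Nat.add_sub_cancel]
  zify [Nat.one_le_of_lt h₁]
  rw [pairIndices, Finset.card_sigma, Nat.cast_sum]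
  calc ∑ k ∈ Finset.Ico 1 n₁, ((Finset.Ico (lowerIndex n₁ n₂ φ k)
          (lowerIndex n₁ n₂ φ (n₁ - k) + n₂)).card : ℤ)
      = ∑ k ∈ Finset.Ico 1 n₁,
          (lowerIndex n₁ n₂ φ (n₁ - k) - lowerIndex n₁ n₂ φ k + n₂) := by
        refine Finset.sum_congr rfl fun k hk => ?_
        rw [Int.card_Ico, Int.toNat_of_nonneg (by
          linarith [lowerIndex_le (φ := φ) (n₂ := n₂) (Finset.mem_Ico.mp hk).2.le])]
        ring
    _ = n₂ * (n₁ - 1) := by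
        rw [Finset.sum_add_distrib, Finset.sum_sub_distrib, hreflect, Finset.sum_const,
          Nat.card_Ico, nsmul_eq_mul, Nat.cast_sub (Nat.one_le_of_lt h₁)]
        ring

lemma diffSumPoint_injective (h₁ : 0 < n₁) (h₂ : 0 < n₂) :
    Function.Injective fun q : (_ : ℕ) × ℤ => diffSumPoint n₁ n₂ φ q.1 q.2 := by
  rintro ⟨k, m⟩ ⟨k', m'⟩ h
  have hdiff := congrArg (fun p : ℝ × ℝ => p.2 - p.1) h
  have hsum := congrArg (fun p : ℝ × ℝ => p.1 + p.2) h
  simp only [diffSumPoint_snd_sub_fst, diffSumPoint_fst_add_snd] at hdiff hsum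
  field_simp at hdiff hsum
  obtain rfl : k = k' := by exact_mod_cast hdiff
  obtain rfl : m = m' := by exact_mod_cast mul_left_cancel₀ pi_ne_zero (sub_left_inj.mp hsum)
  rfl

lemma diffSumPairs_eq_image (h₁ : 0 < n₁) (h₂ : 0 < n₂) :
    diffSumPairs n₁ n₂ φ =
      (fun q : (_ : ℕ) × ℤ => diffSumPoint n₁ n₂ φ q.1 q.2) '' pairIndices n₁ n₂ φ := by
  have hn₁ : (0 : ℝ) < n₁ := by exact_mod_cast h₁
  have hn₂ : (0 : ℝ) < n₂ := by exact_mod_cast h₂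
  ext p
  simp only [diffSumPairs, pairIndices, Set.mem_ofPred_eq, Set.mem_image, Finset.coe_sigma,
    Set.mem_sigma_iff, Finset.coe_Ico, Set.mem_Ico, Sigma.exists]
  constructor
  · rintro ⟨hp₁, hlt, hp₂, ⟨k, hk⟩, ⟨m, hm⟩⟩
    have hk₀ : (0 : ℝ) < k := by nlinarith [pi_pos]
    lift k to ℕ using (by exact_mod_cast hk₀.le)
    push_cast at hk hk₀
    have hkn : k < n₁ := by
      have : (k : ℝ) < n₁ := by nlinarith [pi_pos]
      exact_mod_cast this
    have hp : diffSumPoint n₁ n₂ φ k m = p := by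
      have hd : p.2 - p.1 = 2 * π * k / n₁ := by
        rw [eq_div_iff hn₁.ne']
        linarith
      have hs : p.1 + p.2 = 2 * (π * m - φ) / n₂ := by
        rw [eq_div_iff hn₂.ne']
        linarith
      have := diffSumPoint_snd_sub_fst (n₁ := n₁) (n₂ := n₂) (φ := φ) k m
      have := diffSumPoint_fst_add_snd (n₁ := n₁) (n₂ := n₂) (φ := φ) k m
      apply Prod.ext <;> linarith
    refine ⟨k, m, ⟨⟨by exact_mod_cast hk₀, hkn⟩, ?_, ?_⟩, hp⟩
    · rwa [← diffSumPoint_fst_nonneg_iff h₂, hp]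
    · rwa [← diffSumPoint_snd_lt_two_pi_iff h₁ h₂ hkn.le, hp]
  · rintro ⟨k, m, ⟨⟨hk₁, hkn⟩, hm₁, hm₂⟩, rfl⟩
    refine ⟨(diffSumPoint_fst_nonneg_iff h₂ k m).2 hm₁, ?_,
      (diffSumPoint_snd_lt_two_pi_iff h₁ h₂ hkn.le m).2 hm₂, ⟨k, ?_⟩, ⟨m, ?_⟩⟩
    · have := diffSumPoint_snd_sub_fst (n₁ := n₁) (n₂ := n₂) (φ := φ) k m
      have : (0 : ℝ) < 2 * π * k / n₁ := by positivity
      linarith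
    · rw [diffSumPoint_snd_sub_fst]
      push_cast
      field_simp
    · rw [diffSumPoint_fst_add_snd]
      field_simp
      ring

lemma diffSumPairs_finite (h₁ : 0 < n₁) (h₂ : 0 < n₂) : (diffSumPairs n₁ n₂ φ).Finite := by
  rw [diffSumPairs_eq_image h₁ h₂]
  exact (pairIndices n₁ n₂ φ).finite_toSet.image _

lemma ncard_diffSumPairs (h₁ : 0 < n₁) (h₂ : 0 < n₂) :
    (diffSumPairs n₁ n₂ φ).ncard = n₂ * (n₁ - 1) := by
  rw [diffSumPairs_eq_image h₁ h₂, Set.ncard_image_of_injective _ (diffSumPoint_injective h₁ h₂),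
    Set.ncard_coe_finset, card_pairIndices h₁]

end

end Lissajous

open Lissajous in
theorem lissajous_projection_crossing_count
    (nx ny : ℕ) (hnx : 0 < nx) (hny : 0 < ny) (hcop : Nat.Coprime nx ny)
    (φx φy : ℝ) (hphase : ¬ ∃ l : ℤ, (ny : ℝ) * φx - (nx : ℝ) * φy = l * π)
    (S : Set (ℝ × ℝ))
    (hS : S = {p : ℝ × ℝ | 0 ≤ p.1 ∧ p.1 < p.2 ∧ p.2 < 2 * π ∧
      Real.cos (nx * p.1 + φx) = Real.cos (nx * p.2 + φx) ∧
      Real.cos (ny * p.1 + φy) = Real.cos (ny * p.2 + φy)}) :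
    S.Finite ∧ S.ncard = 2 * nx * ny - nx - ny := by
  have hfin₁ := diffSumPairs_finite (φ := φy) hnx hny
  have hfin₂ := diffSumPairs_finite (φ := φx) hny hnx
  rw [hS, doublePoints_eq_union hcop hphase]
  refine ⟨hfin₁.union hfin₂, ?_⟩
  rw [Set.ncard_union_eq (disjoint_diffSumPairs hcop φy φx) hfin₁ hfin₂,
    ncard_diffSumPairs hnx hny, ncard_diffSumPairs hny hnx]
  have := Nat.le_mul_of_pos_right nx hny
  have := Nat.le_mul_of_pos_left ny hnx
  rw [Nat.mul_sub_one, Nat.mul_sub_one, mul_comm ny nx, mul_assoc]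
  omega
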